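/- Let α, β > 1 and r, s ≥ 0, and let a, b : ℝ × [1,∞) → ℂ be continuous with |a(k,t)| ≤ μ_{α,r}(k,t) and |b(k,t)| ≤ μ_{β,s}(k,t). Then there is a constant C (depending on α, β, r, s) such that for all k ∈ ℝ and t ≥ 1, |(a ∗ b)(k,t)| ≤ C ( t^{−r} μ_{β,s}(k,t) + t^{−s} μ_{α,r}(k,t) ), where (a∗b)(k,t) = (1/2π) ∫_ℝ a(k−k′,t) b(k′,t) dk′. -/

import Mathlib

/-!
For each `k'`, either `|k - k'| ≥ |k| / 2` or `|k'| ≥ |k| / 2`, and the corresponding factor of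
`μ_{α,r}(k - k') μ_{β,s}(k')` is then at most `2 ^ α μ_{α,r}(k)`, resp. `2 ^ β μ_{β,s}(k)`.
Bounding that factor pointwise leaves the integral of the other one, which after the substitution
`x = t ^ s k'` is `t ^ (-s) ∫ 1 / (1 + |x| ^ β)`, finite because `β > 1`.
-/

open MeasureTheory

noncomputable def mu (α r k t : ℝ) : ℝ := 1 / (1 + (|k| * t ^ r) ^ α)

noncomputable def conv (a b : ℝ → ℝ → ℂ) (k t : ℝ) : ℂ :=
  (1 / (2 * Real.pi) : ℝ) * ∫ k' : ℝ, a (k - k') t * b k' t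

open Real

noncomputable def profile (α x : ℝ) : ℝ := 1 / (1 + |x| ^ α)

lemma profile_pos (α x : ℝ) : 0 < profile α x := by
  unfold profile; positivity

lemma one_add_rpow_le_two_rpow_mul {α x : ℝ} (hα : 0 ≤ α) (hx : 0 ≤ x) :
    (1 + x) ^ α ≤ 2 ^ α * (1 + x ^ α) := by
  have h2α : 0 ≤ (2 : ℝ) ^ α := by positivity
  rcases le_total x 1 with hx1 | hx1
  · have : (1 + x) ^ α ≤ 2 ^ α := rpow_le_rpow (by positivity) (by linarith) hα
    nlinarith [rpow_nonneg hx α]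
  · have : (1 + x) ^ α ≤ 2 ^ α * x ^ α := by
      rw [← mul_rpow zero_le_two hx]; exact rpow_le_rpow (by positivity) (by linarith) hα
    nlinarith

lemma integrable_profile {α : ℝ} (hα : 1 < α) : Integrable (profile α) := by
  refine ((integrable_one_add_norm (E := ℝ) (r := α) (by simpa using hα)).const_mul (2 ^ α)).mono'
    (by unfold profile; fun_prop : Measurable (profile α)).aestronglyMeasurable
    (.of_forall fun x => ?_)
  rw [norm_of_nonneg (profile_pos α x).le, profile, norm_eq_abs, rpow_neg (by positivity),
    ← div_eq_mul_inv, div_le_div_iff₀ (by positivity) (by positivity), one_mul]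
  exact one_add_rpow_le_two_rpow_mul (by linarith) (abs_nonneg x)

lemma profile_le_rpow_mul_profile {α c x y : ℝ} (hα : 0 ≤ α) (hc : 1 ≤ c) (h : |y| ≤ c * |x|) :
    profile α x ≤ c ^ α * profile α y := by
  have hy : |y| ^ α ≤ c ^ α * |x| ^ α := by
    rw [← mul_rpow (by linarith) (abs_nonneg x)]
    exact rpow_le_rpow (abs_nonneg y) h hα
  have hcα : 1 ≤ c ^ α := one_le_rpow hc hα
  rw [profile, profile, mul_one_div, div_le_div_iff₀ (by positivity) (by positivity)]
  linarith

lemma mu_eq_profile {α r k t : ℝ} (ht : 0 < t) : mu α r k t = profile α (t ^ r * k) := by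
  rw [mu, profile, abs_mul, abs_of_pos (rpow_pos_of_pos ht r), mul_comm]

lemma mu_nonneg (α r k : ℝ) {t : ℝ} (ht : 0 < t) : 0 ≤ mu α r k t :=
  (mu_eq_profile ht).symm ▸ (profile_pos _ _).le

lemma mu_le_rpow_mul_mu {α r c x y t : ℝ} (hα : 0 ≤ α) (ht : 0 < t) (hc : 1 ≤ c)
    (h : |y| ≤ c * |x|) : mu α r x t ≤ c ^ α * mu α r y t := by
  rw [mu_eq_profile ht, mu_eq_profile ht]
  refine profile_le_rpow_mul_profile hα hc ?_
  rw [abs_mul, abs_mul, mul_left_comm]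
  exact mul_le_mul_of_nonneg_left h (abs_nonneg _)

lemma mu_mul_mu_le {α β r s t : ℝ} (hα : 0 ≤ α) (hβ : 0 ≤ β) (ht : 0 < t) (k k' : ℝ) :
    mu α r (k - k') t * mu β s k' t ≤
      2 ^ α * mu α r k t * mu β s k' t + 2 ^ β * mu β s k t * mu α r (k - k') t := by
  have h₁ := mu_nonneg α r (k - k') ht
  have h₂ := mu_nonneg β s k' ht
  have h₃ := mu_nonneg α r k ht
  have h₄ := mu_nonneg β s k ht
  rcases le_total |k| (2 * |k - k'|) with h | h
  · have := mul_le_mul_of_nonneg_right (mu_le_rpow_mul_mu (r := r) hα ht one_le_two h) h₂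
    nlinarith [mul_nonneg (mul_nonneg (rpow_nonneg zero_le_two β) h₄) h₁]
  · have hk' : |k| ≤ 2 * |k'| := by
      have := abs_sub_abs_le_abs_sub k (k - k')
      rw [sub_sub_cancel] at this
      linarith
    have := mul_le_mul_of_nonneg_left (mu_le_rpow_mul_mu (r := s) hβ ht one_le_two hk') h₁
    nlinarith [mul_nonneg (mul_nonneg (rpow_nonneg zero_le_two α) h₃) h₂]

lemma integrable_mu {α : ℝ} (hα : 1 < α) (r : ℝ) {t : ℝ} (ht : 0 < t) :
    Integrable fun k => mu α r k t := by
  simp_rw [mu_eq_profile ht]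
  exact (integrable_profile hα).comp_mul_left' (rpow_pos_of_pos ht r).ne'

lemma integral_mu (α r : ℝ) {t : ℝ} (ht : 0 < t) :
    ∫ k, mu α r k t = t ^ (-r) * ∫ x, profile α x := by
  simp_rw [mu_eq_profile ht]
  rw [Measure.integral_comp_mul_left, smul_eq_mul, abs_of_pos (inv_pos.2 (rpow_pos_of_pos ht r)),
    rpow_neg ht.le]

lemma norm_integral_mul_le {α β r s t : ℝ} (hα : 1 < α) (hβ : 1 < β) (ht : 0 < t)
    {f g : ℝ → ℂ} (hf : ∀ x, ‖f x‖ ≤ mu α r x t) (hg : ∀ x, ‖g x‖ ≤ mu β s x t) (k : ℝ) :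
    ‖∫ k', f (k - k') * g k'‖ ≤
      2 ^ α * (∫ x, profile β x) * t ^ (-s) * mu α r k t
        + 2 ^ β * (∫ x, profile α x) * t ^ (-r) * mu β s k t := by
  have hmuα : Integrable fun k' => mu α r (k - k') t := (integrable_mu hα r ht).comp_sub_left k
  have hmuβ := integrable_mu hβ s ht
  calc ‖∫ k', f (k - k') * g k'‖
      ≤ ∫ k', 2 ^ α * mu α r k t * mu β s k' t + 2 ^ β * mu β s k t * mu α r (k - k') t := by
        refine norm_integral_le_of_norm_le ((hmuβ.const_mul _).add (hmuα.const_mul _))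
          (.of_forall fun k' => ?_)
        rw [norm_mul]
        exact (mul_le_mul (hf _) (hg _) (norm_nonneg _) (mu_nonneg α r _ ht)).trans
          (mu_mul_mu_le (by linarith) (by linarith) ht k k')
    _ = _ := by
        rw [integral_add (hmuβ.const_mul _) (hmuα.const_mul _), integral_const_mul,
          integral_const_mul, integral_sub_left_eq_self (fun x => mu α r x t),
          integral_mu β s ht, integral_mu α r ht]
        ring

theorem convolution_bound_general (α β r s : ℝ) (hα : 1 < α) (hβ : 1 < β)
    (a b : ℝ → ℝ → ℂ)
    (ha : ∀ k t : ℝ, 1 ≤ t → ‖a k t‖ ≤ mu α r k t)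
    (hb : ∀ k t : ℝ, 1 ≤ t → ‖b k t‖ ≤ mu β s k t) :
    ∃ C : ℝ, ∀ k t : ℝ, 1 ≤ t →
      ‖conv a b k t‖
        ≤ C * (t ^ (-r) * mu β s k t + t ^ (-s) * mu α r k t) := by
  set A := 2 ^ α * ∫ x, profile β x
  set B := 2 ^ β * ∫ x, profile α x
  have hA : 0 ≤ A := mul_nonneg (by positivity) (integral_nonneg fun x => (profile_pos β x).le)
  have hB : 0 ≤ B := mul_nonneg (by positivity) (integral_nonneg fun x => (profile_pos α x).le)
  refine ⟨(A + B) / (2 * π), fun k t ht => ?_⟩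
  have ht0 : 0 < t := zero_lt_one.trans_le ht
  have hconv := norm_integral_mul_le hα hβ ht0 (ha · t ht) (hb · t ht) k
  have hmuα := mul_nonneg (rpow_nonneg ht0.le (-s)) (mu_nonneg α r k ht0)
  have hmuβ := mul_nonneg (rpow_nonneg ht0.le (-r)) (mu_nonneg β s k ht0)
  rw [conv, norm_mul, Complex.norm_real, norm_of_nonneg (by positivity), one_div, div_eq_inv_mul,
    mul_assoc]
  gcongr
  nlinarith

theorem convolution_bound (α β r s : ℝ) (hα : 1 < α) (hβ : 1 < β) (hr : 0 ≤ r) (hs : 0 ≤ s)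
    (a b : ℝ → ℝ → ℂ)
    (ha_cont : ContinuousOn (fun p : ℝ × ℝ => a p.1 p.2) (Set.univ ×ˢ Set.Ici 1))
    (hb_cont : ContinuousOn (fun p : ℝ × ℝ => b p.1 p.2) (Set.univ ×ˢ Set.Ici 1))
    (ha : ∀ k t : ℝ, 1 ≤ t → ‖a k t‖ ≤ mu α r k t)
    (hb : ∀ k t : ℝ, 1 ≤ t → ‖b k t‖ ≤ mu β s k t) :
    ∃ C : ℝ, ∀ k t : ℝ, 1 ≤ t →
      ‖conv a b k t‖
        ≤ C * (t ^ (-r) * mu β s k t + t ^ (-s) * mu α r k t) :=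
  convolution_bound_general α β r s hα hβ a b ha hb
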